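/- arXiv:2504.11508 — 5 statements merged into one kernel-verified Lean document; each statement's English description precedes it below -/
import Mathlib

section
/- Define the EPIC canonicalization C_EPIC(R)(s,a,s') = R(s,a,s') + E[γ·R(s',A,S') − R(s,A,S') − γ·R(S,A,S')], where S, S' are identically distributed according to D_S and A ∼ D_A. Then for any potential function φ and the shaped reward R'(s,a,s') = R(s,a,s') + γ·φ(s') − φ(s), one has C_EPIC(R') = C_EPIC(R). -/
/-!
Writing `F(s, a, s') = γ φ(s') - φ(s)`, the shaped reward is `R + F`, and the canonicalization
is additive in the reward, so it suffices that it sends `F` to zero. With `Φ = E[φ(S)]`, the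
expectation `E[γ F(s', A, S') - F(s, A, S')]` equals `(γ² - γ) Φ - F(s, a, s')`, and
`E[F(S, A, S')] = (γ - 1) Φ`; the three terms of the canonicalization therefore cancel.
-/

open Finset

section EPIC

variable {St Ac : Type*} [Fintype St] [Fintype Ac]

def epicCanonical (γ : ℝ) (DS : St → ℝ) (DA : Ac → ℝ) (Q : St → Ac → St → ℝ)
    (s : St) (a : Ac) (s' : St) : ℝ :=
  Q s a s' + (∑ b, ∑ x, DA b * DS x * (γ * Q s' b x - Q s b x))
    - γ * ∑ y, ∑ b, ∑ x, DS y * DA b * DS x * Q y b x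

def potentialShaping (γ : ℝ) (φ : St → ℝ) (s : St) (_ : Ac) (s' : St) : ℝ :=
  γ * φ s' - φ s

theorem epicCanonical_add (γ : ℝ) (DS : St → ℝ) (DA : Ac → ℝ) (Q₁ Q₂ : St → Ac → St → ℝ) :
    epicCanonical γ DS DA (Q₁ + Q₂) = epicCanonical γ DS DA Q₁ + epicCanonical γ DS DA Q₂ := by
  funext s a s'
  simp only [epicCanonical, Pi.add_apply, mul_add, add_sub_add_comm, sum_add_distrib]
  ring

theorem sum_mul_affine_of_sum_eq_one {ι : Type*} [Fintype ι] {D : ι → ℝ}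
    (hD : ∑ i, D i = 1) (f : ι → ℝ) (α β : ℝ) :
    ∑ i, D i * (α * f i - β) = α * ∑ i, D i * f i - β := by
  simp only [mul_sub, sum_sub_distrib, ← sum_mul, hD, one_mul, mul_left_comm _ α, ← mul_sum]

theorem sum_sum_mul_of_sum_eq_one {ι κ : Type*} [Fintype ι] [Fintype κ] {D : ι → ℝ}
    (hD : ∑ i, D i = 1) (E : κ → ℝ) (f : κ → ℝ) :
    ∑ i, ∑ k, D i * E k * f k = ∑ k, E k * f k := by
  simp only [mul_assoc, ← mul_sum, ← sum_mul, hD, one_mul]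

theorem epicCanonical_potentialShaping (γ : ℝ) {DS : St → ℝ} {DA : Ac → ℝ}
    (hDS : ∑ s, DS s = 1) (hDA : ∑ a, DA a = 1) (φ : St → ℝ) :
    epicCanonical γ DS DA (potentialShaping γ φ) = 0 := by
  funext s a s'
  set Φ := ∑ x, DS x * φ x
  have h_next : ∑ b, ∑ x, DA b * DS x * (γ * (γ * φ x - φ s') - (γ * φ x - φ s))
      = (γ * γ - γ) * Φ - (γ * φ s' - φ s) := by
    rw [sum_sum_mul_of_sum_eq_one hDA, ← sum_mul_affine_of_sum_eq_one hDS]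
    exact sum_congr rfl fun x _ => by ring
  have h_mean : ∑ y, ∑ b, ∑ x, DS y * DA b * DS x * (γ * φ x - φ y) = γ * Φ - Φ := by
    have h_inner : ∀ y, ∑ b, ∑ x, DS y * DA b * DS x * (γ * φ x - φ y)
        = DS y * (γ * Φ - φ y) := fun y => by
      simp only [mul_assoc (DS y), ← mul_sum]
      rw [sum_sum_mul_of_sum_eq_one hDA, sum_mul_affine_of_sum_eq_one hDS]
    rw [sum_congr rfl fun y _ => h_inner y]
    simp only [mul_sub, sum_sub_distrib, ← sum_mul, hDS, one_mul, Φ]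
  simp only [epicCanonical, potentialShaping, h_next, h_mean, Pi.zero_apply]
  ring

end EPIC

theorem stmt2_general {St Ac : Type*} [Fintype St] [Fintype Ac]
    (R : St → Ac → St → ℝ) (γ : ℝ)
    (DS : St → ℝ) (DA : Ac → ℝ)
    (hDS1 : ∑ s, DS s = 1)
    (hDA1 : ∑ a, DA a = 1)
    (φ : St → ℝ) :
    let C := fun (Q : St → Ac → St → ℝ) (s : St) (a : Ac) (s' : St) =>
      Q s a s' + (∑ b, ∑ x, DA b * DS x * (γ * Q s' b x - Q s b x))
        - γ * ∑ y, ∑ b, ∑ x, DS y * DA b * DS x * Q y b x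
    C (fun s a s' => R s a s' + γ * φ s' - φ s) = C R := by
  intro C
  have h_shaped : (fun s a s' => R s a s' + γ * φ s' - φ s) = R + potentialShaping γ φ := by
    funext s a s'
    exact add_sub_assoc _ _ _
  change epicCanonical γ DS DA _ = epicCanonical γ DS DA R
  rw [h_shaped, epicCanonical_add, epicCanonical_potentialShaping γ hDS1 hDA1, add_zero]

/-- The EPIC canonicalization is invariant to potential shaping, when the
states `S` and `S'` in the expectation are identically distributed (both
according to `DS`) and the action according to `DA`. -/
theorem stmt2 {St Ac : Type*} [Fintype St] [Fintype Ac]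
    (R : St → Ac → St → ℝ) (γ : ℝ) (hγ0 : 0 ≤ γ) (hγ1 : γ ≤ 1)
    (DS : St → ℝ) (DA : Ac → ℝ)
    (hDS0 : ∀ s, 0 ≤ DS s) (hDS1 : ∑ s, DS s = 1)
    (hDA0 : ∀ a, 0 ≤ DA a) (hDA1 : ∑ a, DA a = 1)
    (φ : St → ℝ) :
    let C := fun (Q : St → Ac → St → ℝ) (s : St) (a : Ac) (s' : St) =>
      Q s a s' + (∑ b, ∑ x, DA b * DS x * (γ * Q s' b x - Q s b x))
        - γ * ∑ y, ∑ b, ∑ x, DS y * DA b * DS x * Q y b x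
    C (fun s a s' => R s a s' + γ * φ s' - φ s) = C R :=
  stmt2_general R γ DS DA hDS1 hDA1 φ
end

section
/- Let C₂(R)(s,a,s') = R(s,a,s') + E[γ R(s',A,S₁) − R(s,A,S₂) − γ R(S₃,A,S₄) + γ² R(S₁,A,k₁) − γ R(S₂,A,k₂) + γ R(S₃,A,k₃) − γ² R(S₄,A,k₄)]. For a potentially shaped reward R' = R + γφ(s') − φ(s), C₂(R')(s,a,s') = C₂(R)(s,a,s') + E[γ³φ(k₁) − γ³φ(k₄) + γ²φ(k₃) − γ²φ(k₂)]. -/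
/-!
The canonicalization `C₂` is linear in the reward, so it suffices to compute it on the pure
shaping term `γ φ(s') - φ(s)`. There the potentials at `S₁, …, S₄` cancel in pairs inside
the expectation, leaving the constant `φ(s) - γ φ(s')`, which (as the weights sum to one)
cancels the outer term, and the potentials at `k₁, …, k₄`, which survive with an extra `γ`.
-/

open Finset

section Canonicalization

variable {St Ac Ω : Type*} [Fintype Ω] (p : Ω → ℝ) (γ : ℝ) (Av : Ω → Ac)
  (S1 S2 S3 S4 k1 k2 k3 k4 : Ω → St) (s : St) (a : Ac) (s' : St)

def canonC2 (Q : St → Ac → St → ℝ) : ℝ :=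
  Q s a s' + ∑ ω, p ω *
    (γ * Q s' (Av ω) (S1 ω) - Q s (Av ω) (S2 ω) - γ * Q (S3 ω) (Av ω) (S4 ω)
      + γ ^ 2 * Q (S1 ω) (Av ω) (k1 ω) - γ * Q (S2 ω) (Av ω) (k2 ω)
      + γ * Q (S3 ω) (Av ω) (k3 ω) - γ ^ 2 * Q (S4 ω) (Av ω) (k4 ω))

theorem canonC2_add (Q Q' : St → Ac → St → ℝ) :
    canonC2 p γ Av S1 S2 S3 S4 k1 k2 k3 k4 s a s' (Q + Q') =
      canonC2 p γ Av S1 S2 S3 S4 k1 k2 k3 k4 s a s' Q +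
        canonC2 p γ Av S1 S2 S3 S4 k1 k2 k3 k4 s a s' Q' := by
  simp only [canonC2, Pi.add_apply]
  rw [add_add_add_comm, ← sum_add_distrib]
  congr 1
  exact sum_congr rfl fun ω _ => by ring

theorem canonC2_potentialShaping (hp : ∑ ω, p ω = 1) (φ : St → ℝ) :
    canonC2 p γ Av S1 S2 S3 S4 k1 k2 k3 k4 s a s' (fun u _ w => γ * φ w - φ u) =
      ∑ ω, p ω *
        (γ ^ 3 * φ (k1 ω) - γ ^ 3 * φ (k4 ω) + γ ^ 2 * φ (k3 ω) - γ ^ 2 * φ (k2 ω)) := by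
  have integrand_eq : ∀ ω,
      γ * (γ * φ (S1 ω) - φ s') - (γ * φ (S2 ω) - φ s)
        - γ * (γ * φ (S4 ω) - φ (S3 ω)) + γ ^ 2 * (γ * φ (k1 ω) - φ (S1 ω))
        - γ * (γ * φ (k2 ω) - φ (S2 ω)) + γ * (γ * φ (k3 ω) - φ (S3 ω))
        - γ ^ 2 * (γ * φ (k4 ω) - φ (S4 ω)) =
      (φ s - γ * φ s') +
        (γ ^ 3 * φ (k1 ω) - γ ^ 3 * φ (k4 ω) + γ ^ 2 * φ (k3 ω) - γ ^ 2 * φ (k2 ω)) :=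
    fun ω => by ring
  simp only [canonC2, integrand_eq, mul_add, sum_add_distrib, ← sum_mul, hp]
  ring

end Canonicalization

theorem stmt4_general {St Ac Ω : Type*} [Fintype Ω]
    (R : St → Ac → St → ℝ) (φ : St → ℝ) (γ : ℝ)
    (p : Ω → ℝ) (hp1 : ∑ ω, p ω = 1)
    (Av : Ω → Ac) (S1 S2 S3 S4 k1 k2 k3 k4 : Ω → St) (s : St) (a : Ac) (s' : St) :
    let E := fun (f : Ω → ℝ) => ∑ ω, p ω * f ω
    let C2 := fun (Q : St → Ac → St → ℝ) =>
      Q s a s' + E (fun ω =>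
        γ * Q s' (Av ω) (S1 ω) - Q s (Av ω) (S2 ω) - γ * Q (S3 ω) (Av ω) (S4 ω)
        + γ ^ 2 * Q (S1 ω) (Av ω) (k1 ω) - γ * Q (S2 ω) (Av ω) (k2 ω)
        + γ * Q (S3 ω) (Av ω) (k3 ω) - γ ^ 2 * Q (S4 ω) (Av ω) (k4 ω))
    C2 (fun u b w => R u b w + γ * φ w - φ u) =
      C2 R + E (fun ω =>
        γ ^ 3 * φ (k1 ω) - γ ^ 3 * φ (k4 ω) + γ ^ 2 * φ (k3 ω) - γ ^ 2 * φ (k2 ω)) := by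
  intro E C2
  have shaped_eq :
      (fun u b w => R u b w + γ * φ w - φ u) = R + fun u _ w => γ * φ w - φ u := by
    funext u b w
    simp only [Pi.add_apply, add_sub_assoc]
  have C2_eq : C2 = canonC2 p γ Av S1 S2 S3 S4 k1 k2 k3 k4 s a s' := rfl
  rw [C2_eq, shaped_eq, canonC2_add, canonC2_potentialShaping (hp := hp1)]

/-- Applying the canonicalization `C₂` to a potentially shaped reward leaves
the residual shaping `E[γ³φ(k₁) − γ³φ(k₄) + γ²φ(k₃) − γ²φ(k₂)]`. -/
theorem stmt4 {St Ac Ω : Type*} [Fintype Ω]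
    (R : St → Ac → St → ℝ) (φ : St → ℝ) (γ : ℝ) (hγ0 : 0 ≤ γ) (hγ1 : γ ≤ 1)
    (p : Ω → ℝ) (hp0 : ∀ ω, 0 ≤ p ω) (hp1 : ∑ ω, p ω = 1)
    (Av : Ω → Ac) (S1 S2 S3 S4 k1 k2 k3 k4 : Ω → St) (s : St) (a : Ac) (s' : St) :
    let E := fun (f : Ω → ℝ) => ∑ ω, p ω * f ω
    let C2 := fun (Q : St → Ac → St → ℝ) =>
      Q s a s' + E (fun ω =>
        γ * Q s' (Av ω) (S1 ω) - Q s (Av ω) (S2 ω) - γ * Q (S3 ω) (Av ω) (S4 ω)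
        + γ ^ 2 * Q (S1 ω) (Av ω) (k1 ω) - γ * Q (S2 ω) (Av ω) (k2 ω)
        + γ * Q (S3 ω) (Av ω) (k3 ω) - γ ^ 2 * Q (S4 ω) (Av ω) (k4 ω))
    C2 (fun u b w => R u b w + γ * φ w - φ u) =
      C2 R + E (fun ω =>
        γ ^ 3 * φ (k1 ω) - γ ^ 3 * φ (k4 ω) + γ ^ 2 * φ (k3 ω) - γ ^ 2 * φ (k2 ω)) :=
  stmt4_general R φ γ p hp1 Av S1 S2 S3 S4 k1 k2 k3 k4 s a s'
end

section
/- The Sparsity Resilient canonicalization C_SRRD(R)(s,a,s') = R(s,a,s') + E[γR(s',A,S₁) − R(s,A,S₂) − γR(S₃,A,S₄) + γ²R(S₁,A,S₅) − γR(S₂,A,S₆) + γR(S₃,A,S₆) − γ²R(S₄,A,S₅)] is invariant to potential shaping: for any φ : S → ℝ and R'(s,a,s') = R(s,a,s') + γφ(s') − φ(s), C_SRRD(R') = C_SRRD(R). -/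
/-!
Shaping adds `γ φ(s') - φ(s)` to the reward outside the expectation. Inside it, every potential
evaluated at a random state occurs twice with opposite signs and equal powers of `γ`, so the
integrand changes pointwise by the constant `φ(s) - γ φ(s')`; as the weights sum to one, this
constant passes through the expectation and cancels the outer term.
-/

theorem Finset.sum_mul_add_const {ι R : Type*} [CommSemiring R] (s : Finset ι) (p f : ι → R)
    (c : R) (hp : ∑ i ∈ s, p i = 1) :
    ∑ i ∈ s, p i * (f i + c) = ∑ i ∈ s, p i * f i + c := by
  rw [Finset.sum_congr rfl fun i _ => mul_add (p i) (f i) c, Finset.sum_add_distrib,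
    ← Finset.sum_mul, hp, one_mul]

section SRRD

variable {St Ac : Type*}

def srrdIntegrand (Q : St → Ac → St → ℝ) (γ : ℝ) (s s' : St) (a : Ac)
    (x₁ x₂ x₃ x₄ x₅ x₆ : St) : ℝ :=
  γ * Q s' a x₁ - Q s a x₂ - γ * Q x₃ a x₄ + γ ^ 2 * Q x₁ a x₅ - γ * Q x₂ a x₆
    + γ * Q x₃ a x₆ - γ ^ 2 * Q x₄ a x₅

theorem srrdIntegrand_potentialShaping (Q : St → Ac → St → ℝ) (φ : St → ℝ) (γ : ℝ)
    (s s' : St) (a : Ac) (x₁ x₂ x₃ x₄ x₅ x₆ : St) :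
    srrdIntegrand (fun u b w => Q u b w + γ * φ w - φ u) γ s s' a x₁ x₂ x₃ x₄ x₅ x₆ =
      srrdIntegrand Q γ s s' a x₁ x₂ x₃ x₄ x₅ x₆ + (φ s - γ * φ s') := by
  unfold srrdIntegrand
  ring

end SRRD

theorem stmt6_general {St Ac Ω : Type*} [Fintype Ω]
    (R : St → Ac → St → ℝ) (φ : St → ℝ) (γ : ℝ)
    (p : Ω → ℝ) (hp1 : ∑ ω, p ω = 1)
    (Av : Ω → Ac) (S1 S2 S3 S4 S5 S6 : Ω → St) :
    let E := fun (f : Ω → ℝ) => ∑ ω, p ω * f ω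
    let CSRRD := fun (Q : St → Ac → St → ℝ) (s : St) (a : Ac) (s' : St) =>
      Q s a s' + E (fun ω =>
        γ * Q s' (Av ω) (S1 ω) - Q s (Av ω) (S2 ω) - γ * Q (S3 ω) (Av ω) (S4 ω)
        + γ ^ 2 * Q (S1 ω) (Av ω) (S5 ω) - γ * Q (S2 ω) (Av ω) (S6 ω)
        + γ * Q (S3 ω) (Av ω) (S6 ω) - γ ^ 2 * Q (S4 ω) (Av ω) (S5 ω))
    CSRRD (fun u b w => R u b w + γ * φ w - φ u) = CSRRD R := by
  intro E CSRRD
  funext s a s'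
  have shaped_integrand := fun ω => srrdIntegrand_potentialShaping R φ γ s s' (Av ω)
    (S1 ω) (S2 ω) (S3 ω) (S4 ω) (S5 ω) (S6 ω)
  simp only [srrdIntegrand] at shaped_integrand
  simp only [CSRRD, E, shaped_integrand, Finset.sum_mul_add_const _ _ _ _ hp1]
  ring

/-- The Sparsity Resilient canonicalization `C_SRRD` is invariant to
potential shaping. -/
theorem stmt6 {St Ac Ω : Type*} [Fintype Ω]
    (R : St → Ac → St → ℝ) (φ : St → ℝ) (γ : ℝ) (hγ0 : 0 ≤ γ) (hγ1 : γ ≤ 1)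
    (p : Ω → ℝ) (hp0 : ∀ ω, 0 ≤ p ω) (hp1 : ∑ ω, p ω = 1)
    (Av : Ω → Ac) (S1 S2 S3 S4 S5 S6 : Ω → St) :
    let E := fun (f : Ω → ℝ) => ∑ ω, p ω * f ω
    let CSRRD := fun (Q : St → Ac → St → ℝ) (s : St) (a : Ac) (s' : St) =>
      Q s a s' + E (fun ω =>
        γ * Q s' (Av ω) (S1 ω) - Q s (Av ω) (S2 ω) - γ * Q (S3 ω) (Av ω) (S4 ω)
        + γ ^ 2 * Q (S1 ω) (Av ω) (S5 ω) - γ * Q (S2 ω) (Av ω) (S6 ω)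
        + γ * Q (S3 ω) (Av ω) (S6 ω) - γ ^ 2 * Q (S4 ω) (Av ω) (S5 ω))
    CSRRD (fun u b w => R u b w + γ * φ w - φ u) = CSRRD R :=
  stmt6_general R φ γ p hp1 Av S1 S2 S3 S4 S5 S6
end

section
/- Under full coverage, i.e., when all the relevant state subsets coincide (S = S' = S'' = S₁ = … = S₆), the EPIC, DARD, and SRRD canonicalizations are all equal, each reducing to C(R)(s,a,s') = R(s,a,s') + E[γR(s',A,S) − R(s,A,S) − γR(S,A,S)]. -/
/-!
Each canonicalization adds to `R s a s'` the expectation of a linear combination of rewards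
at independently sampled states. When every sample has the same law `DS`, a sample that a term
does not mention integrates out because the weights sum to one, and the four SRRD terms
involving `x5` and `x6` cancel in pairs, since `(x1, x5)` and `(x4, x5)`, resp. `(x2, x6)` and
`(x3, x6)`, are identically distributed. All four expressions thereby reduce to
`R s a s' + γ E[R(s', A, S)] - E[R(s, A, S)] - γ E[R(S, A, S')]`.
-/

open Finset

noncomputable section

namespace Canonicalization

variable {St Ac : Type*} [Fintype St] [Fintype Ac]
  (R : St → Ac → St → ℝ) (γ : ℝ) (DS : St → ℝ) (DA : Ac → ℝ)

/-- `E[R(s, A, S)]` with `A ~ DA` and `S ~ DS` independent. -/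
def meanRewardFrom (s : St) : ℝ := ∑ b, DA b * ∑ x, DS x * R s b x

/-- `E[R(S, A, S')]` with `S, S' ~ DS` and `A ~ DA` independent. -/
def meanReward : ℝ := ∑ x, DS x * meanRewardFrom R DS DA x

def epic (s : St) (a : Ac) (s' : St) : ℝ :=
  R s a s' + ∑ b, ∑ x, DA b * DS x * (γ * R s' b x - R s b x)
    - γ * ∑ y, ∑ b, ∑ x, DS y * DA b * DS x * R y b x

def dard (s : St) (a : Ac) (s' : St) : ℝ :=
  R s a s' + ∑ b, ∑ x', ∑ x'', DA b * DS x' * DS x'' *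
    (γ * R s' b x'' - R s b x' - γ * R x' b x'')

def srrd (s : St) (a : Ac) (s' : St) : ℝ :=
  R s a s' + ∑ b, ∑ x1, ∑ x2, ∑ x3, ∑ x4, ∑ x5, ∑ x6,
    DA b * DS x1 * DS x2 * DS x3 * DS x4 * DS x5 * DS x6 *
    (γ * R s' b x1 - R s b x2 - γ * R x3 b x4
      + γ ^ 2 * R x1 b x5 - γ * R x2 b x6
      + γ * R x3 b x6 - γ ^ 2 * R x4 b x5)

def fullCoverage (s : St) (a : Ac) (s' : St) : ℝ :=
  R s a s' + ∑ x, ∑ b, ∑ y, DS x * DA b * DS y *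
    (γ * R s' b y - R s b y - γ * R x b y)

theorem meanReward_eq_sum_action_first :
    meanReward R DS DA = ∑ b, DA b * ∑ x, DS x * ∑ y, DS y * R x b y := by
  simp only [meanReward, meanRewardFrom, mul_sum]
  rw [sum_comm]
  exact sum_congr rfl fun _ _ ↦ sum_congr rfl fun _ _ ↦ sum_congr rfl fun _ _ ↦
    mul_left_comm _ _ _

theorem epic_eq (s : St) (a : Ac) (s' : St) :
    epic R γ DS DA s a s' = R s a s' + γ * meanRewardFrom R DS DA s'
      - meanRewardFrom R DS DA s - γ * meanReward R DS DA := by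
  simp only [epic, meanReward, meanRewardFrom, mul_sub, sum_sub_distrib, mul_assoc,
    mul_left_comm _ γ, ← mul_sum]
  ring

variable {DS} (hDS : ∑ x, DS x = 1)
include hDS

theorem dard_eq (s : St) (a : Ac) (s' : St) :
    dard R γ DS DA s a s' = R s a s' + γ * meanRewardFrom R DS DA s'
      - meanRewardFrom R DS DA s - γ * meanReward R DS DA := by
  simp only [dard, meanReward_eq_sum_action_first, meanRewardFrom, mul_sub, sum_sub_distrib,
    mul_assoc, mul_left_comm _ γ, ← mul_sum, ← sum_mul, hDS, one_mul]
  ring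

theorem srrd_eq (s : St) (a : Ac) (s' : St) :
    srrd R γ DS DA s a s' = R s a s' + γ * meanRewardFrom R DS DA s'
      - meanRewardFrom R DS DA s - γ * meanReward R DS DA := by
  simp only [srrd, meanReward_eq_sum_action_first, meanRewardFrom, mul_add, mul_sub,
    sum_add_distrib, sum_sub_distrib, mul_assoc, mul_left_comm _ γ, mul_left_comm _ (γ ^ 2),
    ← mul_sum, ← sum_mul, hDS, one_mul]
  ring

theorem fullCoverage_eq (s : St) (a : Ac) (s' : St) :
    fullCoverage R γ DS DA s a s' = R s a s' + γ * meanRewardFrom R DS DA s'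
      - meanRewardFrom R DS DA s - γ * meanReward R DS DA := by
  simp only [fullCoverage, meanReward, meanRewardFrom, mul_sub, sum_sub_distrib, mul_assoc,
    mul_left_comm _ γ, ← mul_sum, ← sum_mul, hDS, one_mul]
  ring

end Canonicalization

end

theorem stmt8_general {St Ac : Type*} [Fintype St] [Fintype Ac]
    (R : St → Ac → St → ℝ) (γ : ℝ)
    (DS : St → ℝ) (DA : Ac → ℝ)
    (hDS1 : ∑ s, DS s = 1) :
    ∀ (s : St) (a : Ac) (s' : St),
    let CEPIC := R s a s'
      + ∑ b, ∑ x, DA b * DS x * (γ * R s' b x - R s b x)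
      - γ * ∑ y, ∑ b, ∑ x, DS y * DA b * DS x * R y b x
    let CDARD := R s a s'
      + ∑ b, ∑ x', ∑ x'', DA b * DS x' * DS x'' *
          (γ * R s' b x'' - R s b x' - γ * R x' b x'')
    let CSRRD := R s a s'
      + ∑ b, ∑ x1, ∑ x2, ∑ x3, ∑ x4, ∑ x5, ∑ x6,
          DA b * DS x1 * DS x2 * DS x3 * DS x4 * DS x5 * DS x6 *
          (γ * R s' b x1 - R s b x2 - γ * R x3 b x4
           + γ ^ 2 * R x1 b x5 - γ * R x2 b x6
           + γ * R x3 b x6 - γ ^ 2 * R x4 b x5)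
    let Ccommon := R s a s'
      + ∑ x, ∑ b, ∑ y, DS x * DA b * DS y *
          (γ * R s' b y - R s b y - γ * R x b y)
    CEPIC = Ccommon ∧ CDARD = Ccommon ∧ CSRRD = Ccommon := by
  intro s a s' _ _ _ _
  have hcommon := Canonicalization.fullCoverage_eq R γ DA hDS1 s a s'
  exact ⟨(Canonicalization.epic_eq R γ DS DA s a s').trans hcommon.symm,
    (Canonicalization.dard_eq R γ DA hDS1 s a s').trans hcommon.symm,
    (Canonicalization.srrd_eq R γ DA hDS1 s a s').trans hcommon.symm⟩

/-- Under full coverage, i.e. when all the relevant state subsets coincide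
(all state variables are sampled i.i.d. from a single distribution `DS` and
actions from `DA`), the EPIC, DARD and SRRD canonicalizations all coincide,
each reducing to `R(s,a,s') + E[γR(s',A,S) − R(s,A,S) − γR(S,A,S)]`. -/
theorem stmt8 {St Ac : Type*} [Fintype St] [Fintype Ac]
    (R : St → Ac → St → ℝ) (γ : ℝ) (hγ0 : 0 ≤ γ) (hγ1 : γ ≤ 1)
    (DS : St → ℝ) (DA : Ac → ℝ)
    (hDS0 : ∀ s, 0 ≤ DS s) (hDS1 : ∑ s, DS s = 1)
    (hDA0 : ∀ a, 0 ≤ DA a) (hDA1 : ∑ a, DA a = 1) :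
    ∀ (s : St) (a : Ac) (s' : St),
    let CEPIC := R s a s'
      + ∑ b, ∑ x, DA b * DS x * (γ * R s' b x - R s b x)
      - γ * ∑ y, ∑ b, ∑ x, DS y * DA b * DS x * R y b x
    let CDARD := R s a s'
      + ∑ b, ∑ x', ∑ x'', DA b * DS x' * DS x'' *
          (γ * R s' b x'' - R s b x' - γ * R x' b x'')
    let CSRRD := R s a s'
      + ∑ b, ∑ x1, ∑ x2, ∑ x3, ∑ x4, ∑ x5, ∑ x6,
          DA b * DS x1 * DS x2 * DS x3 * DS x4 * DS x5 * DS x6 *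
          (γ * R s' b x1 - R s b x2 - γ * R x3 b x4
           + γ ^ 2 * R x1 b x5 - γ * R x2 b x6
           + γ * R x3 b x6 - γ ^ 2 * R x4 b x5)
    let Ccommon := R s a s'
      + ∑ x, ∑ b, ∑ y, DS x * DA b * DS y *
          (γ * R s' b y - R s b y - γ * R x b y)
    CEPIC = Ccommon ∧ CDARD = Ccommon ∧ CSRRD = Ccommon :=
  stmt8_general R γ DS DA hDS1
end

section
/- Under the worst case of EPIC canonicalization with all non-forward transitions unsampled (u = v = 0), the effective residual shaping of Ĉ_EPIC applied to R' = R + γφ(s') − φ(s) equals γφ(s') − φ(s) up to an additive constant, and its absolute value is bounded by 2M where M = max_s |φ(s)|; since Ĉ_EPIC then has two reward terms with upper bound 2Z, the relative shaping error satisfies RSE(Ĉ_EPIC(R)) ≤ M/Z. -/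
/-- Worst-case EPIC canonicalization (all non-forward transitions unsampled):
the residual shaping of `Ĉ_EPIC` applied to the shaped reward
`R' = R + γφ(s') − φ(s)` equals `γφ(s') − φ(s)` up to an additive constant,
this effective residual shaping is bounded in absolute value by `2M`, and the
relative shaping error (with `n = 2` reward terms) is at most `M / Z`. -/
theorem stmt18 {St Ac Ω : Type*} [Fintype Ω]
    (R : St → Ac → St → ℝ) (φ : St → ℝ) (γ : ℝ) (hγ0 : 0 ≤ γ) (hγ1 : γ ≤ 1)
    (p : Ω → ℝ) (hp0 : ∀ ω, 0 ≤ p ω) (hp1 : ∑ ω, p ω = 1)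
    (Av : Ω → Ac) (Sv S'v : Ω → St)
    (M Z : ℝ) (hM : ∀ s, |φ s| ≤ M) (hZ : 0 < Z) :
    let Chat := fun (Q : St → Ac → St → ℝ) (s : St) (a : Ac) (s' : St) =>
      Q s a s' - ∑ ω, p ω * (γ * Q (Sv ω) (Av ω) (S'v ω))
    let R' := fun (s : St) (a : Ac) (s' : St) => R s a s' + γ * φ s' - φ s
    (∃ K : ℝ, ∀ s a s', Chat R' s a s' = Chat R s a s' + (γ * φ s' - φ s) + K) ∧
    (∀ s s' : St, |γ * φ s' - φ s| ≤ 2 * M) ∧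
    (∀ s s' : St, |γ * φ s' - φ s| / (2 * Z) ≤ M / Z) := by
  intro Chat R'
  have hb : ∀ s s' : St, |γ * φ s' - φ s| ≤ 2 * M := by
    intro s s'
    have h1 : |γ * φ s' - φ s| ≤ |γ * φ s'| + |φ s| := abs_sub _ _
    have hM0 : 0 ≤ M := le_trans (abs_nonneg _) (hM s)
    have h2 : |γ * φ s'| = γ * |φ s'| := by rw [abs_mul, abs_of_nonneg hγ0]
    nlinarith [hM s, hM s', abs_nonneg (φ s')]
  refine ⟨⟨-∑ ω, p ω * (γ * (γ * φ (S'v ω) - φ (Sv ω))), ?_⟩, hb, ?_⟩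
  · intro s a s'
    simp only [Chat, R']
    have : ∀ ω : Ω, p ω * (γ * (R (Sv ω) (Av ω) (S'v ω) + γ * φ (S'v ω) - φ (Sv ω)))
        = p ω * (γ * R (Sv ω) (Av ω) (S'v ω)) + p ω * (γ * (γ * φ (S'v ω) - φ (Sv ω))) := by
      intro ω; ring
    rw [Finset.sum_congr rfl (fun ω _ => this ω), Finset.sum_add_distrib]
    ring
  · intro s s'
    have := hb s s'
    rw [div_le_div_iff₀ (by linarith) hZ]
    nlinarith [abs_nonneg (γ * φ s' - φ s)]
end
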